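/- Let n be a positive integer and 0 < ε < 1. Set β = ε/(8n), I = ⌈log 2 / log(1+β)⌉, and α_i = (1+β)^i for i = 0, 1, …, I (so α₀ = 1 and α_I ≥ 2). Let L ⊂ ℝⁿ be a full-rank lattice and K ∈ Conv_n, and assume η(α_i K, L) ≤ ε/2 for every i = 0, 1, …, I. Then η(αK, L) < ε for every real α ≥ 1. -/

import Mathlib

open MeasureTheory Set Pointwise Filter
open scoped ENNReal

noncomputable section

abbrev Euc (n : ℕ) := EuclideanSpace ℝ (Fin n)

/-- `N(L, K, x) = |L ∩ (K + x)|`. -/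
def Ncount {n : ℕ} (L K : Set (Euc n)) (x : Euc n) : ℕ :=
  (L ∩ (x +ᵥ K)).ncard

/-- Covering smoothness `η(K, L)`, where `dens` is the asymptotic density of `L`
(`dens = 1/covol(L)` for a full-rank lattice `L`). -/
def eta {n : ℕ} (K L : Set (Euc n)) (dens : ℝ) : ℝ≥0∞ :=
  ⨆ x : Euc n, ENNReal.ofReal |(Ncount L K x : ℝ) / ((volume K).toReal * dens) - 1|

/-- The full-rank lattice `g ℤⁿ` (for `g` an invertible matrix). -/
def latticeOf {n : ℕ} (g : Matrix (Fin n) (Fin n) ℝ) : Set (Euc n) :=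
  {x | ∃ m : Fin n → ℤ, ∀ i, x i = g.mulVec (fun j => (m j : ℝ)) i}

/-- Membership in `Conv_n`: bounded convex subset of `ℝⁿ` with nonempty interior. -/
def IsConvBody {n : ℕ} (K : Set (Euc n)) : Prop :=
  Convex ℝ K ∧ Bornology.IsBounded K ∧ (interior K).Nonempty

/-- The translates `ℓ + K`, `ℓ ∈ L`, are pairwise disjoint. -/
def IsPacking {n : ℕ} (L K : Set (Euc n)) : Prop :=
  L.Pairwise fun y z => Disjoint (y +ᵥ K) (z +ᵥ K)

/-- The translates of `K` by `L` cover `ℝⁿ`. -/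
def IsCovering {n : ℕ} (L K : Set (Euc n)) : Prop :=
  L + K = univ

/-- Covering radius of `L` with respect to `K`. -/
def rCov {n : ℕ} (K L : Set (Euc n)) : ℝ :=
  sInf {α : ℝ | 0 < α ∧ IsCovering L (α • K)}

/-- Packing radius of `L` with respect to `K`. -/
def rPack {n : ℕ} (K L : Set (Euc n)) : ℝ :=
  sSup {α : ℝ | 0 < α ∧ IsPacking L (α • K)}

/-- `ρ_K(L)`: ratio of covering and packing radii. -/
def rhoK {n : ℕ} (K L : Set (Euc n)) : ℝ := rCov K L / rPack K L

/-- The construction A lattice `(1/p)·π_p⁻¹(S)`. -/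
def constA {n : ℕ} (p : ℕ) (S : Submodule (ZMod p) (Fin n → ZMod p)) : Set (Euc n) :=
  {x | ∃ m : Fin n → ℤ, (fun i => (m i : ZMod p)) ∈ S ∧ ∀ i, x i = (m i : ℝ) / p}

/-- The lattice `L(S) = (1/p)·g·π_p⁻¹(S)`, for `L = g ℤⁿ`. -/
def latticeOfS {n : ℕ} (g : Matrix (Fin n) (Fin n) ℝ) (p : ℕ)
    (S : Submodule (ZMod p) (Fin n → ZMod p)) : Set (Euc n) :=
  {x | ∃ m : Fin n → ℤ, (fun i => (m i : ZMod p)) ∈ S ∧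
    ∀ i, x i = g.mulVec (fun j => (m j : ℝ)) i / p}

/-- `Φ_{K,L}(ε)` for a lattice of covolume `covol`. -/
def Phi {n : ℕ} (K L : Set (Euc n)) (covol ε : ℝ) : ℝ :=
  sSup {v : ℝ | ∃ α : ℝ, 0 < α ∧ v = (volume (α • K)).toReal / covol ∧
    ENNReal.ofReal ε < eta (α • K) L (1 / covol)}

/-- Discrete smoothness `η_{F_p}(A, S)`. -/
def etaFp {p n : ℕ} (A S : Set (Fin n → ZMod p)) : ℝ :=
  ⨆ x : Fin n → ZMod p,
    |(((x +ᵥ S) ∩ A).ncard : ℝ) / ((S.ncard : ℝ) * (A.ncard : ℝ) / (p : ℝ) ^ n) - 1|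

/-- Number of `r`-dimensional subspaces of `F_pⁿ`. -/
def GrCard (p n r : ℕ) : ℕ :=
  Nat.card {S : Submodule (ZMod p) (Fin n → ZMod p) // Module.finrank (ZMod p) S = r}

/-! For `b ∈ [1, 2)` pick consecutive net scales `a ≤ b ≤ a' = (1 + β) a`. If `c ∈ K`, convexity
gives `(b - a) c + a K ⊆ b K` and likewise for `b, a'`, so the count for a translate of `b K` is
squeezed between counts for translates of `a K` and `a' K`; their normalisations differ by at most
`(1 + β)ⁿ ≤ 1 + ε/4`, which yields smoothness `7ε/8` on `[1, 2)`. A general `α ≥ 1` is `p b` with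
`p = ⌊α⌋₊` and `b ∈ [1, 2)`; splitting `L` into the `pⁿ` cosets of `p L` writes the count for
`α K` as a sum of `pⁿ` counts for translates of `b K`, and averaging preserves the bound. -/

variable {n : ℕ}

lemma one_add_pow_le_one_add_two_mul {β δ : ℝ} (hβ : 0 ≤ β) (hnβ : n * β ≤ δ) (hδ : δ ≤ 1 / 2) :
    (1 + β) ^ n ≤ 1 + 2 * δ := by
  have hδ0 : 0 ≤ δ := le_trans (by positivity) hnβ
  calc (1 + β) ^ n ≤ Real.exp β ^ n := by
        gcongr
        linarith [Real.add_one_le_exp β]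
    _ = Real.exp (n * β) := (Real.exp_nat_mul β n).symm
    _ ≤ Real.exp δ := Real.exp_le_exp.mpr hnβ
    _ ≤ 1 / (1 - δ) := Real.exp_bound_div_one_sub_of_interval hδ0 (by linarith)
    _ ≤ 1 + 2 * δ := by
        rw [div_le_iff₀ (by linarith)]
        nlinarith

lemma le_pow_ceil_log_div_log {x y : ℝ} (hx : 0 < x) (hy : 1 < y) :
    x ≤ y ^ ⌈Real.log x / Real.log y⌉₊ := by
  have hlog : 0 < Real.log y := Real.log_pos hy
  rw [← Real.log_le_log_iff hx (by positivity), Real.log_pow, ← div_le_iff₀ hlog]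
  exact Nat.le_ceil _

lemma abs_div_sub_one_le_iff {a W e : ℝ} (hW : 0 < W) :
    |a / W - 1| ≤ e ↔ |a - W| ≤ e * W := by
  rw [div_sub_one hW.ne', abs_div, abs_of_pos hW, div_le_iff₀ hW]

lemma abs_sum_div_sub_one_le {ι : Type*} [Fintype ι] [Nonempty ι] {f : ι → ℝ} {W e : ℝ}
    (hW : 0 < W) (h : ∀ i, |f i / W - 1| ≤ e) :
    |(∑ i, f i) / (Fintype.card ι * W) - 1| ≤ e := by
  simp only [abs_div_sub_one_le_iff hW] at h
  rw [abs_div_sub_one_le_iff (by positivity)]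
  calc |∑ i, f i - Fintype.card ι * W| = |∑ i, (f i - W)| := by
        rw [Finset.sum_sub_distrib, Finset.sum_const, nsmul_eq_mul, Finset.card_univ]
    _ ≤ ∑ i, |f i - W| := Finset.abs_sum_le_sum_abs _ _
    _ ≤ ∑ _i : ι, e * W := Finset.sum_le_sum fun i _ => h i
    _ = e * (Fintype.card ι * W) := by
        rw [Finset.sum_const, nsmul_eq_mul, Finset.card_univ]; ring

lemma Set.ncard_eq_sum_ncard_of_equiv_prod {α β ι : Type*} [Fintype ι] (e : α ≃ β × ι)
    {s : Set α} (hs : ∀ i, {b | e.symm (b, i) ∈ s}.Finite) :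
    s.ncard = ∑ i, {b | e.symm (b, i) ∈ s}.ncard := by
  have : ∀ i, Finite {b | e.symm (b, i) ∈ s} := fun i => (hs i).to_subtype
  calc s.ncard = Nat.card (Σ i, {b | e.symm (b, i) ∈ s}) := by
        rw [← Nat.card_coe_set_eq]
        exact Nat.card_congr <| (e.trans (Equiv.prodComm β ι)).subtypeEquiv (by simp) |>.trans
          (Equiv.subtypeProdEquivSigmaSubtype fun i b => e.symm (b, i) ∈ s)
    _ = _ := by rw [Nat.card_sigma]; rfl

lemma Convex.vadd_smul_subset_smul {E : Type*} [AddCommGroup E] [Module ℝ E] {K : Set E}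
    (hK : Convex ℝ K) {c : E} (hc : c ∈ K) {a b : ℝ} (ha : 0 ≤ a) (hab : a ≤ b) :
    (b - a) • c +ᵥ a • K ⊆ b • K := by
  rintro _ ⟨x, hx, rfl⟩
  have hsplit : b • K = (b - a) • K + a • K := by
    rw [← hK.add_smul (sub_nonneg.mpr hab) ha, sub_add_cancel]
  rw [hsplit]
  exact Set.add_mem_add (Set.smul_mem_smul_set hc) hx

lemma Ncount_smul_le_Ncount_smul {L K : Set (Euc n)} (hK : Convex ℝ K) {c : Euc n} (hc : c ∈ K)
    {a b : ℝ} (ha : 0 ≤ a) (hab : a ≤ b) {y : Euc n}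
    (hfin : (L ∩ ((y - (b - a) • c) +ᵥ b • K)).Finite) :
    Ncount L (a • K) y ≤ Ncount L (b • K) (y - (b - a) • c) := by
  refine Set.ncard_le_ncard (Set.inter_subset_inter_right _ ?_) hfin
  calc y +ᵥ a • K = (y - (b - a) • c) +ᵥ ((b - a) • c +ᵥ a • K) := by
        rw [vadd_vadd, sub_add_cancel]
    _ ⊆ _ := Set.vadd_set_mono (hK.vadd_smul_subset_smul hc ha hab)

lemma antilipschitzWith_intCast_pi (ι : Type*) [Fintype ι] :
    AntilipschitzWith 1 fun (m : ι → ℤ) i => (m i : ℝ) :=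
  AntilipschitzWith.of_le_mul_dist fun m m' => by
    rw [NNReal.coe_one, one_mul, dist_pi_le_iff dist_nonneg]
    intro i
    rw [← Int.dist_cast_real]
    exact dist_le_pi_dist (fun i => (m i : ℝ)) (fun i => (m' i : ℝ)) i

def latticePoint (g : Matrix (Fin n) (Fin n) ℝ) (m : Fin n → ℤ) : Euc n :=
  WithLp.toLp 2 (g.mulVec fun j => (m j : ℝ))

lemma latticeOf_eq_range (g : Matrix (Fin n) (Fin n) ℝ) :
    latticeOf g = Set.range (latticePoint g) := by
  ext x
  exact ⟨fun ⟨m, hm⟩ => ⟨m, PiLp.ext fun i => (hm i).symm⟩, fun ⟨m, hm⟩ => ⟨m, fun i => hm ▸ rfl⟩⟩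

lemma latticePoint_smul_add (g : Matrix (Fin n) (Fin n) ℝ) (p : ℤ) (q r : Fin n → ℤ) :
    latticePoint g (p • q + r) = (p : ℝ) • latticePoint g q + latticePoint g r := by
  have hcast : (fun j => (((p • q + r) j : ℤ) : ℝ)) =
      (p : ℝ) • (fun j => (q j : ℝ)) + fun j => (r j : ℝ) := by
    ext j; simp
  rw [latticePoint, hcast, Matrix.mulVec_add, Matrix.mulVec_smul]
  rfl

lemma exists_antilipschitzWith_latticePoint {g : Matrix (Fin n) (Fin n) ℝ} (hg : g.det ≠ 0) :
    ∃ C, AntilipschitzWith C (latticePoint g) := by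
  let T : (Fin n → ℝ) ≃L[ℝ] Euc n :=
    (g.toLinearEquiv' (g.invertibleOfIsUnitDet (isUnit_iff_ne_zero.mpr hg))).toContinuousLinearEquiv
      |>.trans (EuclideanSpace.equiv (Fin n) ℝ).symm
  exact ⟨_, T.antilipschitz.comp (antilipschitzWith_intCast_pi (Fin n))⟩

lemma finite_preimage_latticePoint {g : Matrix (Fin n) (Fin n) ℝ} (hg : g.det ≠ 0)
    {B : Set (Euc n)} (hB : Bornology.IsBounded B) : (latticePoint g ⁻¹' B).Finite := by
  obtain ⟨C, hC⟩ := exists_antilipschitzWith_latticePoint hg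
  simpa using Metric.finite_isBounded_inter_isClosed (isDiscrete_univ_iff.mpr inferInstance)
    (hC.isBounded_preimage hB) isClosed_univ

lemma Ncount_latticeOf {g : Matrix (Fin n) (Fin n) ℝ} (hg : g.det ≠ 0) (C : Set (Euc n))
    (x : Euc n) : Ncount (latticeOf g) C x = (latticePoint g ⁻¹' (x +ᵥ C)).ncard := by
  obtain ⟨_, hC⟩ := exists_antilipschitzWith_latticePoint hg
  rw [Ncount, latticeOf_eq_range, ← Set.image_preimage_eq_range_inter,
    Set.ncard_image_of_injective _ hC.injective]

lemma latticeOf_inter_finite {g : Matrix (Fin n) (Fin n) ℝ} (hg : g.det ≠ 0)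
    {B : Set (Euc n)} (hB : Bornology.IsBounded B) : (latticeOf g ∩ B).Finite := by
  rw [latticeOf_eq_range, ← Set.image_preimage_eq_range_inter]
  exact (finite_preimage_latticePoint hg hB).image _

def divModEquivPi (n p : ℕ) [NeZero p] : (Fin n → ℤ) ≃ (Fin n → ℤ) × (Fin n → Fin p) :=
  (Equiv.piCongrRight fun _ => Int.divModEquiv p).trans (Equiv.arrowProdEquivProdArrow _ _ _)

lemma divModEquivPi_symm_apply (p : ℕ) [NeZero p] (q : Fin n → ℤ) (r : Fin n → Fin p) :
    (divModEquivPi n p).symm (q, r) = (p : ℤ) • q + fun i => ((r i : ℕ) : ℤ) := by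
  ext i
  simp [divModEquivPi, mul_comm]

lemma Ncount_latticeOf_natCast_smul {g : Matrix (Fin n) (Fin n) ℝ} (hg : g.det ≠ 0)
    {C : Set (Euc n)} (hC : Bornology.IsBounded C) (p : ℕ) [NeZero p] (x : Euc n) :
    Ncount (latticeOf g) ((p : ℝ) • C) x = ∑ r : Fin n → Fin p,
      Ncount (latticeOf g) C ((p : ℝ)⁻¹ • (x - latticePoint g fun i => ((r i : ℕ) : ℤ))) := by
  have hp : (p : ℝ) ≠ 0 := NeZero.ne _
  have hfiber : ∀ r : Fin n → Fin p,
      {q | (divModEquivPi n p).symm (q, r) ∈ latticePoint g ⁻¹' (x +ᵥ (p : ℝ) • C)} =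
        latticePoint g ⁻¹'
          ((p : ℝ)⁻¹ • (x - latticePoint g fun i => ((r i : ℕ) : ℤ)) +ᵥ C) := by
    intro r
    ext q
    simp only [Set.mem_ofPred_eq, Set.mem_preimage, divModEquivPi_symm_apply,
      latticePoint_smul_add, Int.cast_natCast, Set.mem_vadd_set_iff_neg_vadd_mem,
      Set.mem_smul_set_iff_inv_smul_mem₀ hp, vadd_eq_add]
    convert Iff.rfl using 2
    match_scalars <;> field_simp
  simp_rw [Ncount_latticeOf hg, ← hfiber]
  exact Set.ncard_eq_sum_ncard_of_equiv_prod _ fun r =>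
    hfiber r ▸ finite_preimage_latticePoint hg (hC.vadd _)

lemma eta_smul_le_ofReal_iff {K L : Set (Euc n)} {d s e : ℝ} (hs : 0 ≤ s) (he : 0 ≤ e) :
    eta (s • K) L d ≤ ENNReal.ofReal e ↔
      ∀ x, |(Ncount L (s • K) x : ℝ) / (s ^ n * ((volume K).toReal * d)) - 1| ≤ e := by
  have hvol : (volume (s • K)).toReal = s ^ n * (volume K).toReal := by
    rw [Measure.addHaar_smul, ENNReal.toReal_mul, ENNReal.toReal_ofReal (abs_nonneg _),
      finrank_euclideanSpace_fin, abs_of_nonneg (pow_nonneg hs n)]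
  simp only [eta, iSup_le_iff, ENNReal.ofReal_le_ofReal_iff he, hvol, mul_assoc]

lemma abs_Ncount_smul_div_sub_one_le_of_le_of_le {L K : Set (Euc n)}
    (hL : ∀ B : Set (Euc n), Bornology.IsBounded B → (L ∩ B).Finite)
    (hKc : Convex ℝ K) (hKb : Bornology.IsBounded K) {c : Euc n} (hc : c ∈ K)
    {V ε β a b a' : ℝ} (hV : 0 < V) (hε : 0 ≤ ε) (hε1 : ε ≤ 1) (hβ : (1 + β) ^ n ≤ 1 + ε / 4)
    (ha : 0 < a) (hab : a ≤ b) (hba' : b ≤ a') (hb : b ≤ (1 + β) * a) (ha' : a' ≤ (1 + β) * b)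
    (hsa : ∀ x, |(Ncount L (a • K) x : ℝ) / (a ^ n * V) - 1| ≤ ε / 2)
    (hsa' : ∀ x, |(Ncount L (a' • K) x : ℝ) / (a' ^ n * V) - 1| ≤ ε / 2) (z : Euc n) :
    |(Ncount L (b • K) z : ℝ) / (b ^ n * V) - 1| ≤ 7 * ε / 8 := by
  have hb0 : 0 < b := ha.trans_le hab
  have ha'0 : 0 < a' := hb0.trans_le hba'
  have hlower : Ncount L (a • K) (z + (b - a) • c) ≤ Ncount L (b • K) z := by
    simpa using Ncount_smul_le_Ncount_smul hKc hc ha.le hab (y := z + (b - a) • c)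
      (hL _ ((hKb.smul₀ b).vadd _))
  have hupper : Ncount L (b • K) z ≤ Ncount L (a' • K) (z - (a' - b) • c) :=
    Ncount_smul_le_Ncount_smul hKc hc hb0.le hba' (hL _ ((hKb.smul₀ a').vadd _))
  have hba : b ^ n * V ≤ (1 + ε / 4) * (a ^ n * V) := by
    rw [← mul_assoc]
    gcongr
    calc b ^ n ≤ ((1 + β) * a) ^ n := by gcongr
      _ ≤ (1 + ε / 4) * a ^ n := by rw [mul_pow]; gcongr
  have hab' : a' ^ n * V ≤ (1 + ε / 4) * (b ^ n * V) := by
    rw [← mul_assoc]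
    gcongr
    calc a' ^ n ≤ ((1 + β) * b) ^ n := by gcongr
      _ ≤ (1 + ε / 4) * b ^ n := by rw [mul_pow]; gcongr
  have hNa := (abs_le.mp <| (abs_div_sub_one_le_iff (by positivity)).mp <|
    hsa (z + (b - a) • c)).1
  have hNa' := (abs_le.mp <| (abs_div_sub_one_le_iff (by positivity)).mp <|
    hsa' (z - (a' - b) • c)).2
  rw [abs_div_sub_one_le_iff (by positivity), abs_le]
  have hlower' : (Ncount L (a • K) (z + (b - a) • c) : ℝ) ≤ Ncount L (b • K) z := by
    exact_mod_cast hlower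
  have hupper' : (Ncount L (b • K) z : ℝ) ≤ Ncount L (a' • K) (z - (a' - b) • c) := by
    exact_mod_cast hupper
  have hbV : 0 < b ^ n * V := by positivity
  constructor
  · have haV : 0 < a ^ n * V := by positivity
    nlinarith [mul_le_mul_of_nonneg_left hba (by linarith : 0 ≤ 1 - 7 * ε / 8),
      mul_nonneg hε haV.le, mul_nonneg (mul_nonneg hε hε) haV.le]
  · nlinarith [mul_le_mul_of_nonneg_left hab' (by linarith : 0 ≤ 1 + ε / 2), mul_nonneg hε hbV.le,
      mul_nonneg (mul_nonneg hε (sub_nonneg.mpr hε1)) hbV.le]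

lemma abs_Ncount_smul_div_sub_one_le_of_net {L K : Set (Euc n)}
    (hL : ∀ B : Set (Euc n), Bornology.IsBounded B → (L ∩ B).Finite)
    (hKc : Convex ℝ K) (hKb : Bornology.IsBounded K) {c : Euc n} (hc : c ∈ K)
    {V ε β : ℝ} {I : ℕ} (hV : 0 < V) (hε : 0 ≤ ε) (hε1 : ε ≤ 1) (hβ : 0 < β)
    (hpow : (1 + β) ^ n ≤ 1 + ε / 4) (hI : 2 ≤ (1 + β) ^ I)
    (hnet : ∀ i ≤ I, ∀ x,
      |(Ncount L ((1 + β) ^ i • K) x : ℝ) / (((1 + β) ^ i) ^ n * V) - 1| ≤ ε / 2)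
    {b : ℝ} (hb1 : 1 ≤ b) (hb2 : b < 2) (z : Euc n) :
    |(Ncount L (b • K) z : ℝ) / (b ^ n * V) - 1| ≤ 7 * ε / 8 := by
  obtain ⟨i, hib, hbi⟩ := exists_nat_pow_near hb1 (by linarith : 1 < 1 + β)
  have hiI : i + 1 ≤ I := (pow_lt_pow_iff_right₀ (by linarith : 1 < 1 + β)).mp (by linarith)
  exact abs_Ncount_smul_div_sub_one_le_of_le_of_le hL hKc hKb hc hV hε hε1 hpow (by positivity)
    hib hbi.le (hbi.le.trans_eq (pow_succ' _ _)) (by rw [pow_succ']; gcongr)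
    (hnet i (by omega)) (hnet (i + 1) hiI) z

lemma abs_Ncount_smul_div_sub_one_le_of_one_le {g : Matrix (Fin n) (Fin n) ℝ} (hg : g.det ≠ 0)
    {K : Set (Euc n)} (hK : Bornology.IsBounded K) {V e : ℝ} (hV : 0 < V)
    (hbase : ∀ b : ℝ, 1 ≤ b → b < 2 → ∀ z,
      |(Ncount (latticeOf g) (b • K) z : ℝ) / (b ^ n * V) - 1| ≤ e)
    {α : ℝ} (hα : 1 ≤ α) (x : Euc n) :
    |(Ncount (latticeOf g) (α • K) x : ℝ) / (α ^ n * V) - 1| ≤ e := by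
  set p := ⌊α⌋₊
  have hp1 : 1 ≤ p := Nat.one_le_floor_iff α |>.mpr hα
  have : NeZero p := NeZero.of_pos hp1
  have hp : (1 : ℝ) ≤ p := by exact_mod_cast hp1
  set b := α / p
  have hb1 : 1 ≤ b := by rw [le_div_iff₀ (by positivity), one_mul]; exact Nat.floor_le (by linarith)
  have hb2 : b < 2 := by
    rw [div_lt_iff₀ (by positivity)]; linarith [Nat.lt_floor_add_one α]
  have hαb : α = p * b := by simp only [b]; field_simp
  have hαK : α • K = (p : ℝ) • b • K := by rw [smul_smul, ← hαb]
  have hαV : α ^ n * V = Fintype.card (Fin n → Fin p) * (b ^ n * V) := by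
    simp [hαb, mul_pow, mul_assoc]
  rw [hαK, Ncount_latticeOf_natCast_smul hg (hK.smul₀ b), hαV, Nat.cast_sum]
  exact abs_sum_div_sub_one_le (by positivity) fun r => hbase b hb1 hb2 _

/-- smoothness along a multiplicative net in `[1,2)` implies
smoothness for all dilates `α ≥ 1`. -/
theorem statement15 (n : ℕ) (hn : 0 < n) (ε : ℝ) (hε0 : 0 < ε) (hε1 : ε < 1)
    (g : Matrix (Fin n) (Fin n) ℝ) (hg : g.det ≠ 0)
    (K : Set (Euc n)) (hK : IsConvBody K)
    (hnet : ∀ i : ℕ, i ≤ ⌈Real.log 2 / Real.log (1 + ε / (8 * n))⌉₊ →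
      eta ((1 + ε / (8 * n)) ^ i • K) (latticeOf g) (1 / |g.det|) ≤ ENNReal.ofReal (ε / 2)) :
    ∀ α : ℝ, 1 ≤ α →
      eta (α • K) (latticeOf g) (1 / |g.det|) < ENNReal.ofReal ε := by
  obtain ⟨hKc, hKb, c, hc⟩ := hK
  set β := ε / (8 * n)
  set V := (volume K).toReal * (1 / |g.det|)
  have hβ : 0 < β := by positivity
  have hpow : (1 + β) ^ n ≤ 1 + ε / 4 := by
    have hnβ : n * β = ε / 8 := by simp only [β]; field_simp
    linarith [one_add_pow_le_one_add_two_mul hβ.le hnβ.le (by linarith)]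
  have hV : 0 < V :=
    mul_pos (ENNReal.toReal_pos (Measure.measure_pos_of_nonempty_interior _ ⟨c, hc⟩).ne'
      hKb.measure_lt_top.ne) (by positivity)
  have hnet' := fun i hi => (eta_smul_le_ofReal_iff (by positivity) (by positivity)).mp (hnet i hi)
  intro α hα
  calc eta (α • K) (latticeOf g) (1 / |g.det|) ≤ ENNReal.ofReal (7 * ε / 8) :=
        (eta_smul_le_ofReal_iff (by positivity) (by positivity)).mpr <|
          abs_Ncount_smul_div_sub_one_le_of_one_le hg hKb hV (fun b hb1 hb2 =>
            abs_Ncount_smul_div_sub_one_le_of_net (fun _ => latticeOf_inter_finite hg) hKc hKb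
              (interior_subset hc) hV hε0.le hε1.le hβ hpow
              (le_pow_ceil_log_div_log two_pos (by linarith)) hnet' hb1 hb2) hα
    _ < ENNReal.ofReal ε := (ENNReal.ofReal_lt_ofReal_iff hε0).mpr (by linarith)

end
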